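/- arXiv:1810.04272 — 2 statements merged into one kernel-verified Lean document; each statement's English description precedes it below -/
import Mathlib

section
/- Let V = V₁ + iV₂ with V₁, V₂ : ℝ^n → ℝ smooth, and assume: (i) V₁ ≥ 0; (ii) ∂^α V₁ and ∂^α V₂ are bounded on ℝ^n for every multi-index |α| ≥ 2; (iii) there is C₀ > 0 with |V₂(x)| ≤ C₀(1 + V₁(x) + |∇V₂(x)|²) for all x; (iv) there is C > 1 with V₁(x) ≥ (1/C)(1 + |∇V₂(x)|²) for |x| ≥ C; (v) the zero set V₁^{−1}(0) is a finite set {x₁, …, x_N}; (vi) V₂(x_j) = 0 and ∇V₂(x_j) = 0 for 1 ≤ j ≤ N; and (vii) the complex symmetric matrix V''(x_j) = V₁''(x_j) + iV₂''(x_j) is invertible for each j. Then there exists C' > 0 such that |V₂(x)| ≤ C'·(V₁(x) + |∇V₂(x)|²) for all x ∈ ℝ^n. -/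
noncomputable section

/-- The Hessian matrix of `f : ℝ^n → ℝ` at `x`, with entries
`∂²f/∂x_i∂x_j (x) = D²f(x)[e_i, e_j]`. -/
def hessMatrix (n : ℕ) (f : EuclideanSpace ℝ (Fin n) → ℝ)
    (x : EuclideanSpace ℝ (Fin n)) : Matrix (Fin n) (Fin n) ℝ :=
  Matrix.of fun i j =>
    iteratedFDeriv ℝ 2 f x ![EuclideanSpace.single i 1, EuclideanSpace.single j 1]


section Aux

open Metric Set

variable {n : ℕ}
local notation "E" => EuclideanSpace ℝ (Fin n)

lemma norm_grad (f : E → ℝ) (x : E) : ‖gradient f x‖ = ‖fderiv ℝ f x‖ := by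
  rw [gradient]; exact LinearIsometryEquiv.norm_map _ _

lemma norm_fderiv_fderiv (f : E → ℝ) (z : E) :
    ‖fderiv ℝ (fderiv ℝ f) z‖ = ‖iteratedFDeriv ℝ 2 f z‖ := by
  rw [← norm_iteratedFDeriv_zero (𝕜 := ℝ) (f := fderiv ℝ (fderiv ℝ f)),
    norm_iteratedFDeriv_fderiv (f := fderiv ℝ f) (n := 0),
    norm_iteratedFDeriv_fderiv (f := f) (n := 1)]

lemma grad_lip {f : E → ℝ} (hf : ContDiff ℝ (⊤ : ℕ∞) f) {M : ℝ}
    (hM : ∀ x, ‖iteratedFDeriv ℝ 2 f x‖ ≤ M) (x y : E) :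
    ‖gradient f x - gradient f y‖ ≤ M * ‖x - y‖ := by
  have h1 : ‖gradient f x - gradient f y‖ = ‖fderiv ℝ f x - fderiv ℝ f y‖ := by
    rw [gradient, gradient, ← map_sub]; exact LinearIsometryEquiv.norm_map _ _
  rw [h1]
  have hd : ∀ z : E, z ∈ (univ : Set E) → DifferentiableAt ℝ (fderiv ℝ f) z := fun z _ =>
    ((hf.fderiv_right (m := 1) (by exact WithTop.coe_le_coe.mpr le_top)).differentiable one_ne_zero).differentiableAt
  exact convex_univ.norm_image_sub_le_of_norm_fderiv_le hd
    (fun z _ => (norm_fderiv_fderiv f z) ▸ hM z) (mem_univ y) (mem_univ x)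

lemma fderiv_apply_eq_inner_grad {f : E → ℝ} (x v : E) :
    fderiv ℝ f x v = inner ℝ (gradient f x) v := by
  rw [gradient, InnerProductSpace.toDual_symm_apply]

lemma upper_taylor {f : E → ℝ} (hf : ContDiff ℝ (⊤ : ℕ∞) f) {M : ℝ} (hM : 0 ≤ M)
    (hlip : ∀ x y : E, ‖gradient f x - gradient f y‖ ≤ M * ‖x - y‖) (x h : E) :
    f (x + h) ≤ f x + inner ℝ (gradient f x) h + M * ‖h‖ ^ 2 := by
  have bound : ∀ y ∈ closedBall x ‖h‖, ‖fderiv ℝ f y - fderiv ℝ f x‖ ≤ M * ‖h‖ := by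
    intro y hy
    have heq : ‖fderiv ℝ f y - fderiv ℝ f x‖ = ‖gradient f y - gradient f x‖ := by
      rw [gradient, gradient, ← map_sub]
      exact (LinearIsometryEquiv.norm_map _ _).symm
    have hyx : ‖y - x‖ ≤ ‖h‖ := by simpa [mem_closedBall, dist_eq_norm] using hy
    rw [heq]
    calc ‖gradient f y - gradient f x‖ ≤ M * ‖y - x‖ := hlip y x
      _ ≤ M * ‖h‖ := by nlinarith
  have key : ‖f (x + h) - f x - (fderiv ℝ f x) (x + h - x)‖ ≤ (M * ‖h‖) * ‖x + h - x‖ :=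
    (convex_closedBall x ‖h‖).norm_image_sub_le_of_norm_hasFDerivWithin_le'
      (fun y _ => (hf.differentiable (by simp) y).hasFDerivAt.hasFDerivWithinAt)
      bound (mem_closedBall_self (norm_nonneg h))
      (by simp [mem_closedBall, dist_eq_norm])
  simp only [add_sub_cancel_left] at key
  rw [fderiv_apply_eq_inner_grad] at key
  have h2 := (abs_le.mp (by rwa [Real.norm_eq_abs] at key)).2
  nlinarith [h2]

lemma grad_sq_le_of_nonneg {f : E → ℝ} (hf : ContDiff ℝ (⊤ : ℕ∞) f) {M : ℝ} (hM : 0 < M)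
    (hlip : ∀ x y : E, ‖gradient f x - gradient f y‖ ≤ M * ‖x - y‖)
    (hpos : ∀ x, 0 ≤ f x) (x : E) :
    ‖gradient f x‖ ^ 2 ≤ 4 * M * f x := by
  set g := gradient f x with hg
  have key := upper_taylor hf hM.le hlip x (-(1 / (2 * M)) • g)
  have h1 : (inner ℝ g (-(1 / (2 * M)) • g) : ℝ) = -(1 / (2 * M)) * ‖g‖ ^ 2 := by
    rw [real_inner_smul_right, real_inner_self_eq_norm_sq]
  have h2 : ‖(-(1 / (2 * M)) • g)‖ ^ 2 = (1 / (2 * M)) ^ 2 * ‖g‖ ^ 2 := by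
    rw [norm_smul, mul_pow, Real.norm_eq_abs, abs_neg, sq_abs]
  have h0 := hpos (x + -(1 / (2 * M)) • g)
  rw [h1, h2] at key
  have expand : f x + -(1 / (2 * M)) * ‖g‖ ^ 2 + M * ((1 / (2 * M)) ^ 2 * ‖g‖ ^ 2)
      = f x - ‖g‖ ^ 2 / (4 * M) := by field_simp; ring
  rw [expand] at key
  have h3 : ‖g‖ ^ 2 / (4 * M) ≤ f x := by linarith
  have h4 := (div_le_iff₀ (by positivity : (0:ℝ) < 4 * M)).mp h3
  linarith

lemma fderiv_gradient_inner {f : E → ℝ} (a u v : E) :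
    (inner ℝ (fderiv ℝ (gradient f) a u) v : ℝ) = fderiv ℝ (fderiv ℝ f) a u v := by
  have hcomp : gradient f =
      (InnerProductSpace.toDual ℝ E).symm ∘ fderiv ℝ f := rfl
  rw [hcomp, LinearIsometryEquiv.comp_fderiv]
  simp only [ContinuousLinearMap.coe_comp', Function.comp_apply,
    LinearIsometryEquiv.coe_coe]
  exact InnerProductSpace.toDual_symm_apply

lemma hess_entry {f : E → ℝ} (a : E) (i j : Fin n) :
    iteratedFDeriv ℝ 2 f a ![EuclideanSpace.single i 1, EuclideanSpace.single j 1]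
      = fderiv ℝ (fderiv ℝ f) a (EuclideanSpace.single i 1) (EuclideanSpace.single j 1) := by
  rw [iteratedFDeriv_two_apply]
  norm_num

-- expanding a vector in the standard basis
lemma expand_basis (h : E) : h = ∑ j : Fin n, h j • EuclideanSpace.single j (1:ℝ) := by
  ext i
  rw [WithLp.ofLp_sum, Finset.sum_apply]
  simp [EuclideanSpace.single_apply]

lemma grad_deriv_vecMul {f : E → ℝ} (a : E) (h : E) (i : Fin n) :
    (inner ℝ (fderiv ℝ (gradient f) a h) (EuclideanSpace.single i 1) : ℝ)
      = Matrix.vecMul (fun j => h j) (hessMatrix n f a) i := by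
  rw [fderiv_gradient_inner]
  have hexp : fderiv ℝ (fderiv ℝ f) a h = ∑ j : Fin n,
      h j • fderiv ℝ (fderiv ℝ f) a (EuclideanSpace.single j 1) := by
    conv_lhs => rw [expand_basis h]
    rw [map_sum]
    simp only [map_smul]
  rw [hexp]
  rw [Matrix.vecMul, dotProduct]
  simp only [ContinuousLinearMap.coe_sum', Finset.sum_apply, ContinuousLinearMap.smul_apply,
    smul_eq_mul]
  congr 1 with j
  rw [hessMatrix, Matrix.of_apply, hess_entry]

lemma vecMul_eq_zero_of_isUnit {H₁ H₂ : Matrix (Fin n) (Fin n) ℝ}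
    (hu : IsUnit (H₁.map Complex.ofReal + Complex.I • H₂.map Complex.ofReal))
    {h : Fin n → ℝ} (e1 : Matrix.vecMul h H₁ = 0) (e2 : Matrix.vecMul h H₂ = 0) : h = 0 := by
  set M := H₁.map Complex.ofReal + Complex.I • H₂.map Complex.ofReal with hM
  set hc : Fin n → ℂ := fun j => (h j : ℂ) with hhc
  have key : Matrix.vecMul hc M = 0 := by
    funext i
    have k1 : (∑ j, hc j * (H₁.map Complex.ofReal) j i) = ((Matrix.vecMul h H₁ i : ℝ) : ℂ) := by
      rw [Matrix.vecMul, dotProduct]; push_cast [Matrix.map_apply]; rfl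
    have k2 : (∑ j, hc j * (H₂.map Complex.ofReal) j i) = ((Matrix.vecMul h H₂ i : ℝ) : ℂ) := by
      rw [Matrix.vecMul, dotProduct]; push_cast [Matrix.map_apply]; rfl
    have : Matrix.vecMul hc M i = (∑ j, hc j * (H₁.map Complex.ofReal) j i)
        + Complex.I * (∑ j, hc j * (H₂.map Complex.ofReal) j i) := by
      rw [Matrix.vecMul, dotProduct, hM]
      simp only [Matrix.add_apply, Matrix.smul_apply, smul_eq_mul, mul_add,
        Finset.sum_add_distrib, Finset.mul_sum]
      congr 1
      exact Finset.sum_congr rfl fun j _ => by ring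
    rw [this, k1, k2, e1, e2]
    simp
  obtain ⟨u, hu'⟩ := hu
  have h1 : hc = Matrix.vecMul hc (M * (↑u⁻¹ : Matrix (Fin n) (Fin n) ℂ)) := by
    rw [← hu', Units.mul_inv, Matrix.vecMul_one]
  rw [← Matrix.vecMul_vecMul, key, Matrix.zero_vecMul] at h1
  funext j
  have := congrFun h1 j
  simpa [hhc] using this

lemma exists_pos_lower {f₁ f₂ : E → ℝ} (a : E)
    (hu : IsUnit ((hessMatrix n f₁ a).map Complex.ofReal
      + Complex.I • (hessMatrix n f₂ a).map Complex.ofReal)) :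
    ∃ c > 0, ∀ h : E,
      c * ‖h‖ ≤ ‖fderiv ℝ (gradient f₁) a h‖ + ‖fderiv ℝ (gradient f₂) a h‖ := by
  set L₁ := fderiv ℝ (gradient f₁) a with hL₁
  set L₂ := fderiv ℝ (gradient f₂) a with hL₂
  set Φ : E →ₗ[ℝ] E × E := (L₁.prod L₂).toLinearMap with hΦ
  have hker : LinearMap.ker Φ = ⊥ := by
    rw [LinearMap.ker_eq_bot']
    intro h hh
    have h1 : L₁ h = 0 := congrArg Prod.fst hh
    have h2 : L₂ h = 0 := congrArg Prod.snd hh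
    have e1 : Matrix.vecMul (fun j => h j) (hessMatrix n f₁ a) = 0 := by
      funext i
      rw [← grad_deriv_vecMul]
      show (inner ℝ (L₁ h) (EuclideanSpace.single i 1) : ℝ) = _
      rw [h1]
      simp
    have e2 : Matrix.vecMul (fun j => h j) (hessMatrix n f₂ a) = 0 := by
      funext i
      rw [← grad_deriv_vecMul]
      show (inner ℝ (L₂ h) (EuclideanSpace.single i 1) : ℝ) = _
      rw [h2]
      simp
    have := vecMul_eq_zero_of_isUnit hu e1 e2
    ext i
    exact congrFun this i
  obtain ⟨K, K0, hK⟩ := Φ.exists_antilipschitzWith hker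
  refine ⟨(K:ℝ)⁻¹, by positivity, fun h => ?_⟩
  have hd := hK.le_mul_dist h 0
  rw [dist_zero_right, map_zero, dist_zero_right] at hd
  have hΦn : ‖Φ h‖ ≤ ‖L₁ h‖ + ‖L₂ h‖ := by
    have : Φ h = (L₁ h, L₂ h) := rfl
    rw [this, Prod.norm_def]
    exact max_le (le_add_of_nonneg_right (norm_nonneg _))
      (le_add_of_nonneg_left (norm_nonneg _))
  have hKpos : (0:ℝ) < K := K0
  have : ‖h‖ ≤ K * (‖L₁ h‖ + ‖L₂ h‖) := le_trans hd (by nlinarith [norm_nonneg (Φ h)])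
  rw [inv_mul_le_iff₀ hKpos]
  linarith [this]

lemma local_quadratic_bound {f₁ f₂ : E → ℝ}
    (hf₁ : ContDiff ℝ (⊤ : ℕ∞) f₁) (hf₂ : ContDiff ℝ (⊤ : ℕ∞) f₂)
    {M : ℝ} (hM : 1 ≤ M)
    (hlip₁ : ∀ x y, ‖gradient f₁ x - gradient f₁ y‖ ≤ M * ‖x - y‖)
    (hlip₂ : ∀ x y, ‖gradient f₂ x - gradient f₂ y‖ ≤ M * ‖x - y‖)
    (hpos : ∀ x, 0 ≤ f₁ x) (a : E)
    (ha₂ : f₂ a = 0) (hg₁ : gradient f₁ a = 0) (hg₂ : gradient f₂ a = 0)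
    {c : ℝ} (hc : 0 < c)
    (hlow : ∀ h, c * ‖h‖ ≤ ‖fderiv ℝ (gradient f₁) a h‖ + ‖fderiv ℝ (gradient f₂) a h‖) :
    ∃ δ > 0, ∀ x ∈ ball a δ,
      |f₂ x| ≤ (32 * M ^ 2 / c ^ 2) * (f₁ x + ‖gradient f₂ x‖ ^ 2) := by
  have hMpos : (0:ℝ) < M := lt_of_lt_of_le one_pos hM
  have hdiff₁ : Differentiable ℝ (gradient f₁) :=
    (InnerProductSpace.toDual ℝ _).symm.differentiable.comp
      ((hf₁.fderiv_right (m := 1) (by exact WithTop.coe_le_coe.mpr le_top)).differentiable one_ne_zero)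
  have hdiff₂ : Differentiable ℝ (gradient f₂) :=
    (InnerProductSpace.toDual ℝ _).symm.differentiable.comp
      ((hf₂.fderiv_right (m := 1) (by exact WithTop.coe_le_coe.mpr le_top)).differentiable one_ne_zero)
  set L₁ := fderiv ℝ (gradient f₁) a with hL₁
  set L₂ := fderiv ℝ (gradient f₂) a with hL₂
  have hfd₁ : HasFDerivAt (gradient f₁) L₁ a := (hdiff₁ a).hasFDerivAt
  have hfd₂ : HasFDerivAt (gradient f₂) L₂ a := (hdiff₂ a).hasFDerivAt
  have e1 := (hasFDerivAt_iff_isLittleO_nhds_zero.mp hfd₁).def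
    (by positivity : (0:ℝ) < c/4)
  have e2 := (hasFDerivAt_iff_isLittleO_nhds_zero.mp hfd₂).def
    (by positivity : (0:ℝ) < c/4)
  have ecomb := e1.and e2
  rw [Metric.eventually_nhds_iff] at ecomb
  obtain ⟨δ, δpos, hδ⟩ := ecomb
  refine ⟨δ, δpos, fun x hx => ?_⟩
  set h := x - a with hh
  have hxa : a + h = x := by rw [hh]; abel
  have hhδ : dist h 0 < δ := by
    rw [dist_zero_right, hh, ← dist_eq_norm]
    exact hx
  obtain ⟨b1, b2⟩ := hδ hhδ
  rw [hxa, hg₁, sub_zero] at b1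
  rw [hxa, hg₂, sub_zero] at b2
  set A := ‖gradient f₁ x‖ with hA
  set Bn := ‖gradient f₂ x‖ with hBn
  have hsum : c / 2 * ‖h‖ ≤ A + Bn := by
    have t1 : ‖L₁ h‖ ≤ A + c/4 * ‖h‖ := by
      have heq : L₁ h = gradient f₁ x - (gradient f₁ x - L₁ h) := by abel
      calc ‖L₁ h‖ = ‖gradient f₁ x - (gradient f₁ x - L₁ h)‖ := by rw [← heq]
        _ ≤ ‖gradient f₁ x‖ + ‖gradient f₁ x - L₁ h‖ := norm_sub_le _ _
        _ ≤ A + c/4 * ‖h‖ := by rw [hA]; gcongr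
    have t2 : ‖L₂ h‖ ≤ Bn + c/4 * ‖h‖ := by
      have heq : L₂ h = gradient f₂ x - (gradient f₂ x - L₂ h) := by abel
      calc ‖L₂ h‖ = ‖gradient f₂ x - (gradient f₂ x - L₂ h)‖ := by rw [← heq]
        _ ≤ ‖gradient f₂ x‖ + ‖gradient f₂ x - L₂ h‖ := norm_sub_le _ _
        _ ≤ Bn + c/4 * ‖h‖ := by rw [hBn]; gcongr
    linarith [hlow h, t1, t2]
  have hf2b : |f₂ x| ≤ M * ‖h‖ ^ 2 := by
    have bound : ∀ y ∈ closedBall a ‖h‖, ‖fderiv ℝ f₂ y‖ ≤ M * ‖h‖ := by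
      intro y hy
      have e3 : ‖fderiv ℝ f₂ y‖ = ‖gradient f₂ y - gradient f₂ a‖ := by
        rw [← norm_grad f₂ y, hg₂, sub_zero]
      have hyb : ‖y - a‖ ≤ ‖h‖ := by simpa [mem_closedBall, dist_eq_norm] using hy
      rw [e3]
      calc ‖gradient f₂ y - gradient f₂ a‖ ≤ M * ‖y - a‖ := hlip₂ y a
        _ ≤ M * ‖h‖ := mul_le_mul_of_nonneg_left hyb hMpos.le
    have key : ‖f₂ x - f₂ a‖ ≤ M * ‖h‖ * ‖x - a‖ :=
      (convex_closedBall a ‖h‖).norm_image_sub_le_of_norm_fderiv_le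
        (fun y _ => hf₂.differentiable (by simp) y)
        bound (mem_closedBall_self (norm_nonneg h))
        (by simp [mem_closedBall, dist_eq_norm, hh])
    rw [ha₂, sub_zero, Real.norm_eq_abs, ← hh] at key
    nlinarith [key]
  have q1 : A ^ 2 ≤ 4 * M * f₁ x := grad_sq_le_of_nonneg hf₁ hMpos hlip₁ hpos x
  have hA0 : 0 ≤ A := norm_nonneg _
  have hB0 : 0 ≤ Bn := norm_nonneg _
  have hf10 : 0 ≤ f₁ x := hpos x
  have hsq : (c/2 * ‖h‖) ^ 2 ≤ (A + Bn) ^ 2 :=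
    pow_le_pow_left₀ (by positivity) hsum 2
  have s2 : (A + Bn) ^ 2 ≤ 2 * A ^ 2 + 2 * Bn ^ 2 := by nlinarith [sq_nonneg (A - Bn)]
  have s3 : c ^ 2 / 4 * ‖h‖ ^ 2 ≤ 8 * M * f₁ x + 2 * Bn ^ 2 := by
    have e : (c/2 * ‖h‖) ^ 2 = c ^ 2 / 4 * ‖h‖ ^ 2 := by ring
    rw [e] at hsq
    linarith [hsq, s2, q1]
  have s4 : c ^ 2 / 4 * ‖h‖ ^ 2 ≤ 8 * M * (f₁ x + Bn ^ 2) := by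
    have e2 : 2 * Bn ^ 2 ≤ 8 * M * Bn ^ 2 := by
      have h28 : (2:ℝ) ≤ 8 * M := by linarith
      have := mul_le_mul_of_nonneg_right h28 (sq_nonneg Bn)
      linarith
    have expand : 8 * M * (f₁ x + Bn ^ 2) = 8 * M * f₁ x + 8 * M * Bn ^ 2 := by ring
    linarith [s3, e2]
  have s6 : c ^ 2 * (M * ‖h‖ ^ 2) ≤ 32 * M ^ 2 * (f₁ x + Bn ^ 2) := by
    have := mul_le_mul_of_nonneg_left s4 (by linarith : (0:ℝ) ≤ 4 * M)
    linarith [this]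
  have main : c ^ 2 * |f₂ x| ≤ 32 * M ^ 2 * (f₁ x + Bn ^ 2) := by
    have := mul_le_mul_of_nonneg_left hf2b (sq_nonneg c)
    linarith
  rw [div_mul_eq_mul_div, le_div_iff₀ (by positivity : (0:ℝ) < c ^ 2)]
  linarith [main]

end Aux

open Metric Set in
/-- under the assumptions (1.2), (1.5), (1.6), (1.10), (1.11), (1.12), and
invertibility of the Hessians `V''(x_j)`, the bound `|V₂| ≤ O(1)(1 + V₁ + |∇V₂|²)`
self-improves to `|V₂(x)| ≤ C'(V₁(x) + |∇V₂(x)|²)` for all `x`. -/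
theorem improved_V2_bound
    (n N : ℕ) (V₁ V₂ : EuclideanSpace ℝ (Fin n) → ℝ)
    (hV₁ : ContDiff ℝ (⊤ : ℕ∞) V₁) (hV₂ : ContDiff ℝ (⊤ : ℕ∞) V₂)
    (hpos : ∀ x, 0 ≤ V₁ x)
    (hbdd : ∀ k : ℕ, 2 ≤ k → ∃ C, ∀ x,
      ‖iteratedFDeriv ℝ k V₁ x‖ ≤ C ∧ ‖iteratedFDeriv ℝ k V₂ x‖ ≤ C)
    (C₀ : ℝ) (hC₀ : 0 < C₀)
    (h3 : ∀ x, |V₂ x| ≤ C₀ * (1 + V₁ x + ‖gradient V₂ x‖ ^ 2))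
    (C : ℝ) (hC : 1 < C)
    (h4 : ∀ x, C ≤ ‖x‖ → (1 + ‖gradient V₂ x‖ ^ 2) / C ≤ V₁ x)
    (xs : Fin N → EuclideanSpace ℝ (Fin n))
    (h5 : V₁ ⁻¹' {0} = Set.range xs)
    (h6 : ∀ j, V₂ (xs j) = 0 ∧ gradient V₂ (xs j) = 0)
    (h7 : ∀ j, IsUnit ((hessMatrix n V₁ (xs j)).map Complex.ofReal
        + Complex.I • (hessMatrix n V₂ (xs j)).map Complex.ofReal)) :
    ∃ C' > 0, ∀ x, |V₂ x| ≤ C' * (V₁ x + ‖gradient V₂ x‖ ^ 2) := by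
  classical
  obtain ⟨M₀, hM₀⟩ := hbdd 2 le_rfl
  set M := max M₀ 1 with hM
  have hM1 : (1:ℝ) ≤ M := le_max_right _ _
  have hb1 : ∀ x, ‖iteratedFDeriv ℝ 2 V₁ x‖ ≤ M :=
    fun x => le_trans (hM₀ x).1 (le_max_left _ _)
  have hb2 : ∀ x, ‖iteratedFDeriv ℝ 2 V₂ x‖ ≤ M :=
    fun x => le_trans (hM₀ x).2 (le_max_left _ _)
  have hlip₁ := grad_lip hV₁ hb1
  have hlip₂ := grad_lip hV₂ hb2
  have hzero : ∀ j, V₁ (xs j) = 0 := by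
    intro j
    have hmem : xs j ∈ Set.range xs := Set.mem_range_self j
    rw [← h5] at hmem
    exact hmem
  have hgrad1 : ∀ j, gradient V₁ (xs j) = 0 := by
    intro j
    have hmin : IsLocalMin V₁ (xs j) :=
      Filter.Eventually.of_forall fun y => by rw [hzero j]; exact hpos y
    have hfd : fderiv ℝ V₁ (xs j) = 0 := hmin.fderiv_eq_zero
    rw [gradient, hfd, map_zero]
  have hloc : ∀ j : Fin N, ∃ δ > 0, ∃ K, ∀ x ∈ Metric.ball (xs j) δ,
      |V₂ x| ≤ K * (V₁ x + ‖gradient V₂ x‖ ^ 2) := by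
    intro j
    obtain ⟨c, hc, hlow⟩ := exists_pos_lower (xs j) (h7 j)
    obtain ⟨δ, hδ, hb⟩ := local_quadratic_bound hV₁ hV₂ hM1 hlip₁ hlip₂ hpos (xs j)
      (h6 j).1 (hgrad1 j) (h6 j).2 hc hlow
    exact ⟨δ, hδ, 32 * M ^ 2 / c ^ 2, hb⟩
  choose δ δpos K hK using hloc
  obtain ⟨Kmax, hKmax⟩ := Finite.exists_le K
  set U := ⋃ j, Metric.ball (xs j) (δ j) with hU
  set S := Metric.closedBall (0 : EuclideanSpace ℝ (Fin n)) C \ U with hS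
  have hScompact : IsCompact S :=
    (isCompact_closedBall _ _).diff (isOpen_iUnion fun j => Metric.isOpen_ball)
  have hV₁posS : ∀ x ∈ S, 0 < V₁ x := by
    intro x hx
    rcases (hpos x).lt_or_eq with h | h
    · exact h
    · exfalso
      have hxz : x ∈ V₁ ⁻¹' {0} := by simp [← h]
      rw [h5] at hxz
      obtain ⟨j, hj⟩ := hxz
      apply hx.2
      rw [hU]
      exact Set.mem_iUnion.mpr ⟨j, by rw [hj]; exact Metric.mem_ball_self (δpos j)⟩
  have hKS : ∃ KS, 0 ≤ KS ∧ ∀ x ∈ S, |V₂ x| ≤ KS * (V₁ x + ‖gradient V₂ x‖ ^ 2) := by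
    rcases S.eq_empty_or_nonempty with hSe | hSne
    · exact ⟨0, le_rfl, by rw [hSe]; simp⟩
    · obtain ⟨x₀, hx₀S, hx₀min⟩ :=
        hScompact.exists_isMinOn hSne hV₁.continuous.continuousOn
      obtain ⟨x₁, hx₁S, hx₁max⟩ :=
        hScompact.exists_isMaxOn hSne ((continuous_abs.comp hV₂.continuous).continuousOn)
      have hm : 0 < V₁ x₀ := hV₁posS x₀ hx₀S
      refine ⟨|V₂ x₁| / V₁ x₀, by positivity, fun x hx => ?_⟩
      have h1 : |V₂ x| ≤ |V₂ x₁| := hx₁max hx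
      have h2 : V₁ x₀ ≤ V₁ x := hx₀min hx
      have h3' : 0 ≤ ‖gradient V₂ x‖ ^ 2 := sq_nonneg _
      calc |V₂ x| ≤ |V₂ x₁| := h1
        _ = (|V₂ x₁| / V₁ x₀) * V₁ x₀ := by field_simp
        _ ≤ (|V₂ x₁| / V₁ x₀) * (V₁ x + ‖gradient V₂ x‖ ^ 2) := by
            apply mul_le_mul_of_nonneg_left _ (by positivity)
            linarith
  obtain ⟨KS, hKS0, hKSb⟩ := hKS
  have hCpos : (0:ℝ) < C := lt_trans one_pos hC
  have hfar : ∀ x, C ≤ ‖x‖ →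
      |V₂ x| ≤ C₀ * (C + 1) * (V₁ x + ‖gradient V₂ x‖ ^ 2) := by
    intro x hx
    have h4x := h4 x hx
    rw [div_le_iff₀ hCpos] at h4x
    have h1g : 1 + ‖gradient V₂ x‖ ^ 2 ≤ C * V₁ x := by nlinarith [h4x]
    have p1 := mul_le_mul_of_nonneg_left h1g hC₀.le
    have p2 : 0 ≤ C₀ * (C + 1) * ‖gradient V₂ x‖ ^ 2 :=
      mul_nonneg (mul_nonneg hC₀.le (by linarith)) (sq_nonneg _)
    have := h3 x
    nlinarith [this, p1, p2, hpos x]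
  set C' := max (max (C₀ * (C + 1)) KS) (max Kmax 1) with hC'
  have hC'pos : 0 < C' :=
    lt_of_lt_of_le one_pos (le_trans (le_max_right Kmax 1) (le_max_right _ _))
  refine ⟨C', hC'pos, fun x => ?_⟩
  have hSnn : 0 ≤ V₁ x + ‖gradient V₂ x‖ ^ 2 := add_nonneg (hpos x) (sq_nonneg _)
  by_cases hxU : x ∈ U
  · rw [hU] at hxU
    obtain ⟨j, hj⟩ := Set.mem_iUnion.mp hxU
    calc |V₂ x| ≤ K j * (V₁ x + ‖gradient V₂ x‖ ^ 2) := hK j x hj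
      _ ≤ C' * (V₁ x + ‖gradient V₂ x‖ ^ 2) := by
          apply mul_le_mul_of_nonneg_right _ hSnn
          exact le_trans (hKmax j)
            (le_trans (le_max_left Kmax 1) (le_max_right _ _))
  · by_cases hxC : ‖x‖ ≤ C
    · have hxS : x ∈ S := by
        rw [hS]
        exact ⟨by simpa [Metric.mem_closedBall, dist_eq_norm] using hxC, hxU⟩
      calc |V₂ x| ≤ KS * (V₁ x + ‖gradient V₂ x‖ ^ 2) := hKSb x hxS
        _ ≤ C' * (V₁ x + ‖gradient V₂ x‖ ^ 2) := by
            apply mul_le_mul_of_nonneg_right _ hSnn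
            exact le_trans (le_max_right _ _) (le_max_left _ _)
    · push_neg at hxC
      calc |V₂ x| ≤ C₀ * (C + 1) * (V₁ x + ‖gradient V₂ x‖ ^ 2) := hfar x hxC.le
        _ ≤ C' * (V₁ x + ‖gradient V₂ x‖ ^ 2) := by
            apply mul_le_mul_of_nonneg_right _ hSnn
            exact le_trans (le_max_left _ _) (le_max_left _ _)
end
end

section
/- Let A be a real antisymmetric n × n matrix and V = V₁ + iV₂ a complex symmetric n × n matrix such that V₁ = Re V is positive semidefinite and V is invertible. Then for every real λ the matrix T(λ) = λ²I + 2λA + (1/2)V is invertible. Consequently, the 2n × 2n matrix F = [[−A, I], [A² − V/2, −A]] has no real eigenvalues; in particular F is bijective. -/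
/-!
If `T(λ) v = 0` for real `λ` and `v ≠ 0`, take the real part of `v* T(λ) v`: the term `2λ v* A v`
drops out because `A` is skew-Hermitian, and since `V` is symmetric, `Re (v* V v) = v* (Re V) v ≥ 0`.
Hence `λ² |v|² ≤ 0`, so `λ = 0`, where `T(0) = V / 2` is invertible. Eliminating the upper-right
block `-1` of `λ - F` gives `det (λ - F) = det T(λ)`, which transfers this to `F`.
-/

open Matrix

open scoped ComplexOrder MatrixOrder

namespace Matrix

lemma add_conjTranspose_eq_smul_map_re {n : Type*} {V : Matrix n n ℂ} (hV : Vᵀ = V) :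
    V + Vᴴ = (2 : ℝ) • (V.map Complex.re).map Complex.ofReal := by
  ext i j
  have hji : V j i = V i j := congrFun (congrFun hV i) j
  simp [hji, Complex.add_conj, two_mul]

variable {n : Type*} [Fintype n]

lemma star_star_dotProduct_mulVec {R : Type*} [CommSemiring R] [StarRing R]
    (M : Matrix n n R) (v : n → R) :
    star (star v ⬝ᵥ M *ᵥ v) = star v ⬝ᵥ Mᴴ *ᵥ v := by
  rw [star_dotProduct, star_mulVec, star_star, dotProduct_mulVec]

lemma re_star_dotProduct_conjTranspose_mulVec (M : Matrix n n ℂ) (v : n → ℂ) :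
    (star v ⬝ᵥ Mᴴ *ᵥ v).re = (star v ⬝ᵥ M *ᵥ v).re := by
  rw [← star_star_dotProduct_mulVec, Complex.star_def, Complex.conj_re]

lemma re_star_dotProduct_mulVec_eq_zero_of_conjTranspose_eq_neg {M : Matrix n n ℂ}
    (hM : Mᴴ = -M) (v : n → ℂ) : (star v ⬝ᵥ M *ᵥ v).re = 0 := by
  have h := re_star_dotProduct_conjTranspose_mulVec M v
  rw [hM, neg_mulVec, dotProduct_neg, Complex.neg_re] at h
  linarith

lemma PosSemidef.map_ofReal {M : Matrix n n ℝ} (hM : M.PosSemidef) :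
    (M.map Complex.ofReal).PosSemidef := by
  classical
  obtain ⟨B, rfl⟩ := CStarAlgebra.nonneg_iff_eq_star_mul_self.mp hM.nonneg
  have h : (star B * B).map Complex.ofReal = (B.map Complex.ofReal)ᴴ * B.map Complex.ofReal := by
    ext i j
    simp [mul_apply]
  rw [h]
  exact posSemidef_conjTranspose_mul_self _

lemma re_star_dotProduct_mulVec_nonneg_of_transpose_eq_self {V : Matrix n n ℂ} (hV : Vᵀ = V)
    (hre : (V.map Complex.re).PosSemidef) (v : n → ℂ) : 0 ≤ (star v ⬝ᵥ V *ᵥ v).re := by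
  have h := congrArg (fun M => (star v ⬝ᵥ M *ᵥ v).re) (add_conjTranspose_eq_smul_map_re hV)
  simp only [add_mulVec, dotProduct_add, Complex.add_re, smul_mulVec, dotProduct_smul,
    Complex.smul_re, smul_eq_mul, re_star_dotProduct_conjTranspose_mulVec] at h
  linarith [(Complex.nonneg_iff.mp (hre.map_ofReal.dotProduct_mulVec_nonneg v)).1]

theorem isUnit_sq_smul_one_add_smul_add [DecidableEq n] {A B : Matrix n n ℂ}
    (hA : Aᴴ = -A) (hB : ∀ v, 0 ≤ (star v ⬝ᵥ B *ᵥ v).re) (hBunit : IsUnit B) (t : ℝ) :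
    IsUnit ((t : ℂ) ^ 2 • 1 + (2 * (t : ℂ)) • A + B) := by
  rw [isUnit_iff_isUnit_det, isUnit_iff_ne_zero, Ne, ← exists_mulVec_eq_zero_iff]
  rintro ⟨v, hv, hTv⟩
  have hform : t ^ 2 * (star v ⬝ᵥ v).re + (star v ⬝ᵥ B *ᵥ v).re = 0 := by
    have h := congrArg (fun w => (star v ⬝ᵥ w).re) hTv
    simpa [add_mulVec, smul_mulVec, dotProduct_add, dotProduct_smul, ← Complex.ofReal_pow,
      Complex.mul_re, re_star_dotProduct_mulVec_eq_zero_of_conjTranspose_eq_neg hA] using h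
  have hv_pos : 0 < (star v ⬝ᵥ v).re :=
    (Complex.pos_iff.mp (dotProduct_star_self_pos_iff.mpr hv)).1
  have ht : t = 0 := by
    have ht2 : t ^ 2 * (star v ⬝ᵥ v).re = 0 :=
      le_antisymm (by linarith [hB v]) (by positivity)
    exact pow_eq_zero_iff two_ne_zero |>.mp <| (mul_eq_zero.mp ht2).resolve_right hv_pos.ne'
  subst ht
  have hBv : B *ᵥ v = B *ᵥ 0 := by simpa using hTv
  exact hv (mulVec_injective_iff_isUnit.mpr hBunit hBv)

theorem det_fromBlocks_neg_one₁₂ {R l : Type*} [CommRing R] [Fintype l] [DecidableEq l]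
    (A C D : Matrix l l R) : (fromBlocks A (-1) C D).det = (C + D * A).det := by
  have hJ : (-J l R).det = 1 :=
    SymplecticGroup.det_eq_one (SymplecticGroup.neg_mem (SymplecticGroup.J_mem l R))
  calc (fromBlocks A (-1) C D).det = (fromBlocks A (-1) C D * -J l R).det := by
        rw [det_mul, hJ, mul_one]
    _ = (fromBlocks 1 A (-D) C).det := by
        simp [J, fromBlocks_neg, fromBlocks_multiply]
    _ = (C + D * A).det := by
        rw [det_fromBlocks_one₁₁, Matrix.neg_mul, sub_neg_eq_add]

theorem det_smul_one_sub_fromBlocks {R l : Type*} [CommRing R] [Fintype l] [DecidableEq l]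
    (A B : Matrix l l R) (c : R) :
    (c • (1 : Matrix (l ⊕ l) (l ⊕ l) R) - fromBlocks (-A) 1 (A * A - B) (-A)).det
      = (c ^ 2 • 1 + (2 * c) • A + B).det := by
  have h : c • (1 : Matrix (l ⊕ l) (l ⊕ l) R) - fromBlocks (-A) 1 (A * A - B) (-A)
      = fromBlocks (c • 1 + A) (-1) (B - A * A) (c • 1 + A) := by
    rw [← fromBlocks_one, fromBlocks_smul, sub_eq_add_neg, fromBlocks_neg, fromBlocks_add]
    congr 1 <;> simp [sub_eq_add_neg]
  rw [h, det_fromBlocks_neg_one₁₂]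
  congr 1
  simp only [add_mul, mul_add, Matrix.smul_mul, Matrix.mul_smul, Matrix.one_mul, Matrix.mul_one,
    smul_smul]
  module

end Matrix

/-- for `A` real antisymmetric and `V` complex symmetric with `Re V`
positive semidefinite and `V` invertible, the pencil `T(λ) = λ² + 2λA + V/2` is
invertible for every real `λ`; hence the Hamilton matrix
`F = [[−A, I], [A² − V/2, −A]]` has no real eigenvalues, and in particular `F` is
bijective. -/
theorem hamilton_matrix_no_real_eigenvalues
    (n : ℕ) (A : Matrix (Fin n) (Fin n) ℝ) (hA : Aᵀ = -A)
    (V : Matrix (Fin n) (Fin n) ℂ) (hV : Vᵀ = V)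
    (hpsd : (V.map Complex.re).PosSemidef) (hVinv : IsUnit V)
    (Ac : Matrix (Fin n) (Fin n) ℂ) (hAc : Ac = A.map Complex.ofReal)
    (F : Matrix (Fin n ⊕ Fin n) (Fin n ⊕ Fin n) ℂ)
    (hF : F = Matrix.fromBlocks (-Ac) 1 (Ac * Ac - (1/2 : ℂ) • V) (-Ac))
    (T : ℂ → Matrix (Fin n) (Fin n) ℂ)
    (hT : ∀ lam : ℂ, T lam = lam ^ 2 • 1 + (2 * lam) • Ac + (1/2 : ℂ) • V) :
    (∀ lam : ℝ, IsUnit (T (lam : ℂ))) ∧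
    (∀ lam : ℝ,
      ((lam : ℂ) • (1 : Matrix (Fin n ⊕ Fin n) (Fin n ⊕ Fin n) ℂ) - F).det ≠ 0) ∧
    IsUnit F := by
  have hAc_skew : Acᴴ = -Ac := by
    rw [hAc, ← conjTranspose_map _ fun r => (Complex.conj_ofReal r).symm,
      conjTranspose_eq_transpose_of_trivial, hA, Matrix.map_neg _ Complex.ofReal_neg]
  have hB : ∀ v, 0 ≤ (star v ⬝ᵥ ((1/2 : ℂ) • V) *ᵥ v).re := fun v => by
    simpa [smul_mulVec, Complex.mul_re]
      using re_star_dotProduct_mulVec_nonneg_of_transpose_eq_self hV hpsd v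
  have hBunit : IsUnit ((1/2 : ℂ) • V) := by
    rw [isUnit_iff_isUnit_det, det_smul]
    exact (IsUnit.pow _ (by norm_num)).mul ((isUnit_iff_isUnit_det V).mp hVinv)
  have hTunit (lam : ℝ) : IsUnit (T lam) :=
    hT lam ▸ isUnit_sq_smul_one_add_smul_add hAc_skew hB hBunit lam
  have hdet (lam : ℝ) : ((lam : ℂ) • (1 : Matrix _ _ ℂ) - F).det = (T lam).det := by
    rw [hF, hT, det_smul_one_sub_fromBlocks]
  have hdet_ne (lam : ℝ) : ((lam : ℂ) • (1 : Matrix _ _ ℂ) - F).det ≠ 0 :=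
    hdet lam ▸ ((isUnit_iff_isUnit_det _).mp (hTunit lam)).ne_zero
  refine ⟨hTunit, hdet_ne, ?_⟩
  have h0 := (isUnit_iff_isUnit_det _).mpr (isUnit_iff_ne_zero.mpr (hdet_ne 0))
  simpa using h0.neg
end
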